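/- arXiv:2304.00901 — 6 statements merged into one kernel-verified Lean document; each statement's English description precedes it below -/
import Mathlib

section
/- Let K ⊆ G be finite abstract simplicial complexes with m = |K| and n = |G|. Then the left-padded eigenvalue sequences of the Hodge Laplacians satisfy λ_j(K) ≤ λ_j(G) for all 1 ≤ j ≤ n; equivalently, μ_k(K) ≤ λ_{n−m+k}(G) for all 1 ≤ k ≤ m, where μ_1(K) ≤ … ≤ μ_m(K) are the eigenvalues of the Hodge Laplacian of K. -/
open Matrix

/-- A finite abstract simplicial complex: a finite collection of nonempty finite
subsets of the totally ordered vertex set `ℕ`, closed under taking nonempty subsets. -/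
def IsComplex (G : Finset (Finset ℕ)) : Prop :=
  (∀ x ∈ G, x.Nonempty) ∧ ∀ x ∈ G, ∀ y ⊆ x, y.Nonempty → y ∈ G

/-- Entry of the exterior derivative: `(-1)^i` if `y ⊂ x`, `|x| = |y| + 1`, and the
unique vertex of `x \ y` sits at position `i` (0-based) in the increasing enumeration
of `x`; `0` otherwise.  (The sum over the singleton `x \ y` extracts that position.) -/
noncomputable def dEntry (x y : Finset ℕ) : ℝ :=
  if y ⊆ x ∧ x.card = y.card + 1 then
    (-1 : ℝ) ^ ((x \ y).sum fun v => (x.filter (fun w => w < v)).card)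
  else 0

/-- The exterior derivative of a complex, as a matrix indexed by the simplices. -/
noncomputable def extDer (G : Finset (Finset ℕ)) :
    Matrix {x // x ∈ G} {x // x ∈ G} ℝ :=
  Matrix.of fun x y => dEntry x.1 y.1

/-- The Dirac matrix `D = d + dᵀ`. -/
noncomputable def dirac (G : Finset (Finset ℕ)) :
    Matrix {x // x ∈ G} {x // x ∈ G} ℝ :=
  extDer G + (extDer G)ᵀ

/-- The Hodge Laplacian `L = D²`. -/
noncomputable def hodge (G : Finset (Finset ℕ)) :
    Matrix {x // x ∈ G} {x // x ∈ G} ℝ :=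
  dirac G * dirac G

/-- The ascending list of eigenvalues (with multiplicity) of a real symmetric matrix. -/
noncomputable def sortedEigs {m : Type*} [Fintype m] [DecidableEq m]
    (A : Matrix m m ℝ) : List ℝ :=
  if h : A.IsHermitian then (Finset.univ.val.map h.eigenvalues).sort (· ≤ ·) else []

/-! The Dirac matrix of `K` is the principal submatrix of the Dirac matrix `D` of `G` on the
simplices of `K`. Hence, for `v` supported on `K`, `⟪L_K v, v⟫ = ‖(D v)|_K‖² ≤ ‖D v‖² = ⟪L_G v, v⟫`.
A Courant–Fischer dimension count turns this comparison of quadratic forms into a comparison of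
eigenvalues: the span of the eigenvectors of `L_K` for its `i + 1` largest eigenvalues, extended by
zero, meets the span of the eigenvectors of `L_G` for all but its `j` largest eigenvalues as soon as
`j ≤ i`. The padded entries are zeros, dominated by the nonnegative eigenvalues of `L_G = D²`. -/

open Module Submodule RealInnerProductSpace WithLp

namespace OrthonormalBasis

variable {ι E : Type*} [Fintype ι] [NormedAddCommGroup E] [InnerProductSpace ℝ E]

lemma inner_eq_zero_of_mem_span_image (b : OrthonormalBasis ι ℝ E) {s : Set ι} {v : E}
    (hv : v ∈ span ℝ (b '' s)) {i : ι} (hi : i ∉ s) : ⟪b i, v⟫ = 0 := by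
  rw [← b.coe_toBasis, Basis.mem_span_image] at hv
  rw [← b.repr_apply_apply, ← b.coe_toBasis_repr_apply, ← Finsupp.notMem_support_iff]
  exact fun h => hi (hv h)

lemma finrank_span_image (b : OrthonormalBasis ι ℝ E) (s : Finset ι) :
    finrank ℝ (span ℝ (b '' s)) = s.card := by
  rw [Set.image_eq_range, finrank_span_eq_card (b := fun i : (s : Set ι) => b i)
    (b.orthonormal.linearIndependent.comp _ Subtype.val_injective)]
  simp

end OrthonormalBasis

namespace LinearMap.IsSymmetric

variable {E : Type*} [NormedAddCommGroup E] [InnerProductSpace ℝ E] [FiniteDimensional ℝ E]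
  {T : E →ₗ[ℝ] E} {n : ℕ}

lemma inner_apply_self_eq_sum_eigenvalues (hT : T.IsSymmetric) (hn : finrank ℝ E = n) (v : E) :
    ⟪T v, v⟫ = ∑ i, hT.eigenvalues hn i * ⟪hT.eigenvectorBasis hn i, v⟫ ^ 2 := by
  rw [← (hT.eigenvectorBasis hn).sum_inner_mul_inner]
  refine Finset.sum_congr rfl fun i _ => ?_
  rw [hT, apply_eigenvectorBasis, real_inner_smul_right, real_inner_comm,
    RCLike.ofReal_real_eq_id, id_eq]
  ring

lemma mul_norm_sq_le_inner_of_mem_span (hT : T.IsSymmetric) (hn : finrank ℝ E = n)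
    {s : Set (Fin n)} {c : ℝ} (hc : ∀ i ∈ s, c ≤ hT.eigenvalues hn i) {v : E}
    (hv : v ∈ span ℝ (hT.eigenvectorBasis hn '' s)) : c * ‖v‖ ^ 2 ≤ ⟪T v, v⟫ := by
  rw [inner_apply_self_eq_sum_eigenvalues, ← (hT.eigenvectorBasis hn).sum_sq_inner_right,
    Finset.mul_sum]
  refine Finset.sum_le_sum fun i _ => ?_
  by_cases hi : i ∈ s
  · exact mul_le_mul_of_nonneg_right (hc i hi) (sq_nonneg _)
  · simp [OrthonormalBasis.inner_eq_zero_of_mem_span_image _ hv hi]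

lemma inner_le_mul_norm_sq_of_mem_span (hT : T.IsSymmetric) (hn : finrank ℝ E = n)
    {s : Set (Fin n)} {c : ℝ} (hc : ∀ i ∈ s, hT.eigenvalues hn i ≤ c) {v : E}
    (hv : v ∈ span ℝ (hT.eigenvectorBasis hn '' s)) : ⟪T v, v⟫ ≤ c * ‖v‖ ^ 2 := by
  rw [inner_apply_self_eq_sum_eigenvalues, ← (hT.eigenvectorBasis hn).sum_sq_inner_right,
    Finset.mul_sum]
  refine Finset.sum_le_sum fun i _ => ?_
  by_cases hi : i ∈ s
  · exact mul_le_mul_of_nonneg_right (hc i hi) (sq_nonneg _)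
  · simp [OrthonormalBasis.inner_eq_zero_of_mem_span_image _ hv hi]

theorem eigenvalues_le_of_inner_le {F : Type*} [NormedAddCommGroup F] [InnerProductSpace ℝ F]
    [FiniteDimensional ℝ F] {S : F →ₗ[ℝ] F} {m : ℕ} (hS : S.IsSymmetric) (hm : finrank ℝ F = m)
    (hT : T.IsSymmetric) (hn : finrank ℝ E = n) (J : F →ₗᵢ[ℝ] E)
    (hST : ∀ v, ⟪S v, v⟫ ≤ ⟪T (J v), J v⟫) {i : Fin m} {j : Fin n} (hji : (j : ℕ) ≤ i) :
    hS.eigenvalues hm i ≤ hT.eigenvalues hn j := by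
  set V := span ℝ (hS.eigenvectorBasis hm '' ↑(Finset.Iic i))
  set W := span ℝ (hT.eigenvectorBasis hn '' ↑(Finset.Ici j))
  have hV : finrank ℝ (V.map J.toLinearMap) = i + 1 := by
    rw [← (equivMapOfInjective _ J.injective V).finrank_eq,
      OrthonormalBasis.finrank_span_image, Fin.card_Iic]
  have hW : finrank ℝ W = n - j := by
    rw [OrthonormalBasis.finrank_span_image, Fin.card_Ici]
  obtain ⟨_, ⟨v, hvV, rfl⟩, hvW, hv0⟩ : ∃ w ∈ V.map J.toLinearMap, w ∈ W ∧ w ≠ 0 := by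
    by_contra! h
    have := finrank_add_finrank_le_of_disjoint (disjoint_def.mpr fun w hV hW => h w hV hW)
    omega
  have hv : 0 < ‖v‖ ^ 2 := by
    have : v ≠ 0 := by rintro rfl; simp at hv0
    positivity
  refine le_of_mul_le_mul_right ?_ hv
  calc hS.eigenvalues hm i * ‖v‖ ^ 2 ≤ ⟪S v, v⟫ :=
        hS.mul_norm_sq_le_inner_of_mem_span hm
          (fun k hk => hS.eigenvalues_antitone hm (by simpa using hk)) hvV
    _ ≤ ⟪T (J v), J v⟫ := hST v
    _ ≤ hT.eigenvalues hn j * ‖J v‖ ^ 2 :=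
        hT.inner_le_mul_norm_sq_of_mem_span hn
          (fun k hk => hT.eigenvalues_antitone hn (by simpa using hk)) hvW
    _ = hT.eigenvalues hn j * ‖v‖ ^ 2 := by rw [J.norm_map]

end LinearMap.IsSymmetric

section Matrix

variable {ι κ : Type*} [Fintype ι] [Fintype κ]

noncomputable def EuclideanSpace.extendByZero (e : κ ↪ ι) :
    EuclideanSpace ℝ κ →ₗᵢ[ℝ] EuclideanSpace ℝ ι where
  toFun v := toLp 2 (Function.extend e v 0)
  map_add' u v := by
    ext i
    simpa using congrFun (Function.extend_add e u v 0 0) i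
  map_smul' c v := by
    ext i
    simpa using congrFun (Function.extend_smul c e v 0) i
  norm_map' v := by
    simp only [LinearMap.coe_mk, AddHom.coe_mk, EuclideanSpace.norm_eq]
    congr 1
    refine (Fintype.sum_of_injective e e.injective _ _ (fun i hi => ?_) fun k => ?_).symm
    · simp [Function.extend_apply' _ _ _ (by simpa using hi)]
    · simp [e.injective.extend_apply]

lemma EuclideanSpace.sum_sq_comp_embedding_le (e : κ ↪ ι) (y : EuclideanSpace ℝ ι) :
    ∑ k, y (e k) ^ 2 ≤ ‖y‖ ^ 2 :=
  calc ∑ k, y (e k) ^ 2 = ∑ i ∈ Finset.univ.map e, y i ^ 2 :=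
        (Finset.sum_map _ e fun i => y i ^ 2).symm
    _ ≤ ∑ i, y i ^ 2 :=
      Finset.sum_le_sum_of_subset_of_nonneg (Finset.subset_univ _) fun i _ _ => sq_nonneg _
    _ = ‖y‖ ^ 2 := by simp [EuclideanSpace.norm_sq_eq]

lemma Matrix.submatrix_mulVec_apply (D : Matrix ι ι ℝ) (e : κ ↪ ι) (v : κ → ℝ) (k : κ) :
    (D.submatrix e e *ᵥ v) k = (D *ᵥ Function.extend e v 0) (e k) := by
  simp only [mulVec, dotProduct, submatrix_apply]
  refine Fintype.sum_of_injective e e.injective _ _ (fun i hi => ?_) fun k' => ?_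
  · simp [Function.extend_apply' _ _ _ (by simpa using hi)]
  · simp [e.injective.extend_apply]

lemma Matrix.IsHermitian.mul_self {D : Matrix ι ι ℝ} (hD : D.IsHermitian) :
    (D * D).IsHermitian := by
  simpa only [hD.eq] using isHermitian_conjTranspose_mul_self D

variable [DecidableEq ι] [DecidableEq κ]

lemma Matrix.norm_toEuclideanLin_submatrix_sq_le (D : Matrix ι ι ℝ) (e : κ ↪ ι)
    (v : EuclideanSpace ℝ κ) :
    ‖toEuclideanLin (D.submatrix e e) v‖ ^ 2 ≤
      ‖toEuclideanLin D (EuclideanSpace.extendByZero e v)‖ ^ 2 := by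
  convert EuclideanSpace.sum_sq_comp_embedding_le e _ using 1
  rw [EuclideanSpace.norm_sq_eq]
  simp [toLpLin_apply, D.submatrix_mulVec_apply, EuclideanSpace.extendByZero]

lemma Matrix.IsHermitian.inner_toEuclideanLin_mul_self {D : Matrix ι ι ℝ} (hD : D.IsHermitian)
    (w : EuclideanSpace ℝ ι) :
    ⟪toEuclideanLin (D * D) w, w⟫ = ‖toEuclideanLin D w‖ ^ 2 := by
  rw [toLpLin_mul_same, LinearMap.comp_apply, isSymmetric_toEuclideanLin_iff.mpr hD,
    real_inner_self_eq_norm_sq]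

lemma Matrix.IsHermitian.sortedEigs_eq {A : Matrix ι ι ℝ} (hA : A.IsHermitian) :
    sortedEigs A = (List.ofFn hA.eigenvalues₀).reverse := by
  have hperm : Finset.univ.val.map hA.eigenvalues = ↑(List.ofFn hA.eigenvalues₀).reverse := by
    rw [Multiset.coe_reverse, ← Fin.univ_val_map,
      ← Multiset.map_univ_val_equiv (Fintype.equivOfCardEq (Fintype.card_fin _)).symm,
      Multiset.map_map]
    rfl
  rw [sortedEigs, dif_pos hA, hperm, Multiset.coe_sort]
  exact List.mergeSort_of_pairwise
    (by simpa using hA.eigenvalues₀_antitone.sortedGE_ofFn.reverse.pairwise)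

lemma Matrix.IsHermitian.getD_sortedEigs {A : Matrix ι ι ℝ} (hA : A.IsHermitian) {k : ℕ}
    (hk : k < Fintype.card ι) :
    (sortedEigs A).getD k 0 = hA.eigenvalues₀ (Fin.rev ⟨k, hk⟩) := by
  rw [hA.sortedEigs_eq, List.getD_eq_getElem _ _ (by simpa using hk), List.getElem_reverse]
  simp only [Fin.rev, List.length_ofFn, List.getElem_ofFn]
  congr 2
  omega

lemma Matrix.PosSemidef.getD_sortedEigs_nonneg {A : Matrix ι ι ℝ} (hA : A.PosSemidef) (k : ℕ) :
    0 ≤ (sortedEigs A).getD k 0 := by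
  rw [List.getD_eq_getElem?_getD]
  cases h : (sortedEigs A)[k]? with
  | none => rfl
  | some a =>
    rw [sortedEigs, dif_pos hA.isHermitian] at h
    obtain ⟨i, -, rfl⟩ := Multiset.mem_map.mp ((Multiset.mem_sort _).mp (List.mem_of_getElem? h))
    exact hA.eigenvalues_nonneg i

theorem Matrix.IsHermitian.getD_sortedEigs_submatrix_mul_self_le {D : Matrix ι ι ℝ}
    (hD : D.IsHermitian) (e : κ ↪ ι) {k : ℕ} (hk : k < Fintype.card κ) :
    (sortedEigs (D.submatrix e e * D.submatrix e e)).getD k 0 ≤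
      (sortedEigs (D * D)).getD (Fintype.card ι - Fintype.card κ + k) 0 := by
  have hκι := Fintype.card_le_of_embedding e
  have hB := hD.submatrix e
  rw [hB.mul_self.getD_sortedEigs hk, hD.mul_self.getD_sortedEigs (by omega)]
  refine LinearMap.IsSymmetric.eigenvalues_le_of_inner_le _ _ _ _
    (EuclideanSpace.extendByZero e) (fun v => ?_) (by simp only [Fin.val_rev]; omega)
  rw [hB.inner_toEuclideanLin_mul_self, hD.inner_toEuclideanLin_mul_self]
  exact D.norm_toEuclideanLin_submatrix_sq_le e v

end Matrix

lemma dirac_isHermitian (G : Finset (Finset ℕ)) : (dirac G).IsHermitian := by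
  simp [IsHermitian, dirac, add_comm]

lemma hodge_eq_submatrix_mul_self {K G : Finset (Finset ℕ)} (hKG : K ⊆ G) :
    hodge K = (dirac G).submatrix (Subtype.impEmbedding _ _ hKG) (Subtype.impEmbedding _ _ hKG) *
      (dirac G).submatrix (Subtype.impEmbedding _ _ hKG) (Subtype.impEmbedding _ _ hKG) :=
  rfl

lemma hodge_posSemidef (G : Finset (Finset ℕ)) : (hodge G).PosSemidef := by
  simpa only [hodge, (dirac_isHermitian G).eq] using posSemidef_conjTranspose_mul_self (dirac G)

theorem spectral_monotonicity_general (K G : Finset (Finset ℕ)) (hKG : K ⊆ G) :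
    (∀ j < G.card,
      ((List.replicate (G.card - K.card) (0 : ℝ)) ++ sortedEigs (hodge K)).getD j 0 ≤
        (sortedEigs (hodge G)).getD j 0) ∧
    (∀ k < K.card,
      (sortedEigs (hodge K)).getD k 0 ≤
        (sortedEigs (hodge G)).getD (G.card - K.card + k) 0) := by
  have shifted : ∀ k < K.card, (sortedEigs (hodge K)).getD k 0 ≤
      (sortedEigs (hodge G)).getD (G.card - K.card + k) 0 := by
    intro k hk
    rw [hodge_eq_submatrix_mul_self hKG, hodge, ← Fintype.card_coe K, ← Fintype.card_coe G]
    exact (dirac_isHermitian G).getD_sortedEigs_submatrix_mul_self_le _ (by simpa using hk)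
  refine ⟨fun j hj => ?_, shifted⟩
  rcases lt_or_ge j (G.card - K.card) with hpad | hpad
  · rw [List.getD_append _ _ _ _ (by simpa using hpad), List.getD_replicate (h := hpad)]
    exact (hodge_posSemidef G).getD_sortedEigs_nonneg j
  · rw [List.getD_append_right _ _ _ _ (by simpa using hpad), List.length_replicate]
    simpa [Nat.add_sub_cancel' hpad] using shifted (j - (G.card - K.card)) (by omega)

/-- **Spectral monotonicity** (Theorem 1).  If `K ⊆ G` are finite abstract simplicial
complexes with `m = |K|` and `n = |G|`, then the left-padded ascending eigenvalue
sequences of the Hodge Laplacians satisfy `λ_j(K) ≤ λ_j(G)` for all `j`;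
equivalently `μ_k(K) ≤ λ_{(n-m)+k}(G)` for all `k` (here `j, k` are 0-based). -/
theorem spectral_monotonicity (K G : Finset (Finset ℕ))
    (hK : IsComplex K) (hG : IsComplex G) (hKG : K ⊆ G) :
    (∀ j < G.card,
      ((List.replicate (G.card - K.card) (0 : ℝ)) ++ sortedEigs (hodge K)).getD j 0 ≤
        (sortedEigs (hodge G)).getD j 0) ∧
    (∀ k < K.card,
      (sortedEigs (hodge K)).getD k 0 ≤
        (sortedEigs (hodge G)).getD (G.card - K.card + k) 0) :=
  spectral_monotonicity_general K G hKG
end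

section
/- Let D be a real symmetric n×n matrix and P a diagonal n×n matrix with diagonal entries ±1 satisfying P D = −D P. Then for every integer m ≥ 1, the supertrace of the m-th power of the Laplacian vanishes: trace(P · (D²)^m) = 0. Consequently trace(P · exp(−t D²)) = trace(P) for all real t (McKean–Singer symmetry). -/
open Matrix

/-!
Anticommutation with `P` lets one move a factor `D` across `P` at the cost of a sign, and the
cyclicity of the trace moves it back, so `tr(P D^k) = -tr(P D^k)` for every `k ≥ 1`. Hence the
supertrace kills every positive power of `D` (in particular of `D²`), and applied termwise to the
exponential series only the constant term `tr(P)` survives.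
-/

theorem Matrix.trace_mul_pow_succ_eq_zero_of_anticomm {ι R : Type*} [Fintype ι] [DecidableEq ι]
    [CommRing R] [IsAddTorsionFree R] {P D : Matrix ι ι R} (hPD : P * D = -(D * P)) (k : ℕ) :
    (P * D ^ (k + 1)).trace = 0 := by
  refine self_eq_neg.mp ?_
  calc (P * D ^ (k + 1)).trace
      = (P * D * D ^ k).trace := by rw [pow_succ', mul_assoc]
    _ = -(D * (P * D ^ k)).trace := by rw [hPD, neg_mul, trace_neg, mul_assoc]
    _ = -(P * D ^ (k + 1)).trace := by rw [trace_mul_comm, mul_assoc, ← pow_succ]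

theorem ContinuousLinearMap.map_exp_eq_map_one {𝕂 𝔸 E : Type*} [RCLike 𝕂] [NormedRing 𝔸]
    [NormedAlgebra 𝕂 𝔸] [CompleteSpace 𝔸] [AddCommMonoid E] [Module 𝕂 E] [TopologicalSpace E]
    [T2Space E] (φ : 𝔸 →L[𝕂] E) {a : 𝔸} (ha : ∀ k : ℕ, φ (a ^ (k + 1)) = 0) :
    φ (NormedSpace.exp a) = φ 1 := by
  rw [NormedSpace.exp_eq_tsum 𝕂, φ.map_tsum (NormedSpace.expSeries_summable' a),
    tsum_eq_single 0]
  · simp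
  · intro k hk
    obtain ⟨k, rfl⟩ := Nat.exists_eq_succ_of_ne_zero hk
    rw [map_smul, ha, smul_zero]

open scoped Norms.Operator in
theorem Matrix.trace_mul_exp_eq_trace {ι 𝕂 : Type*} [Fintype ι] [DecidableEq ι] [RCLike 𝕂]
    {P A : Matrix ι ι 𝕂} (hA : ∀ k : ℕ, (P * A ^ (k + 1)).trace = 0) :
    (P * NormedSpace.exp A).trace = P.trace := by
  let supertrace : Matrix ι ι 𝕂 →L[𝕂] 𝕂 := LinearMap.toContinuousLinearMap
    ((traceLinearMap ι 𝕂 𝕂).comp (LinearMap.mulLeft 𝕂 P))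
  have h : (P * NormedSpace.exp A).trace = (P * 1).trace := supertrace.map_exp_eq_map_one hA
  rwa [mul_one] at h

theorem mckean_singer_general
    (n : ℕ) (D : Matrix (Fin n) (Fin n) ℝ)
    (P : Matrix (Fin n) (Fin n) ℝ)
    (hPD : P * D = -(D * P)) :
    (∀ m : ℕ, 1 ≤ m → (P * (D * D) ^ m).trace = 0) ∧
    (∀ t : ℝ, (P * NormedSpace.exp (-(t • (D * D)))).trace = P.trace) := by
  have laplacian_pow : ∀ k : ℕ, (P * (D * D) ^ (k + 1)).trace = 0 := fun k => by
    rw [← pow_two, ← pow_mul]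
    exact trace_mul_pow_succ_eq_zero_of_anticomm hPD (2 * k + 1)
  refine ⟨fun m hm => ?_, fun t => trace_mul_exp_eq_trace fun k => ?_⟩
  · obtain ⟨k, rfl⟩ := Nat.exists_eq_add_of_le' hm
    exact laplacian_pow k
  · rw [← neg_smul, smul_pow, Matrix.mul_smul, trace_smul, laplacian_pow, smul_zero]

/-- **McKean–Singer symmetry.**  If `D` is real symmetric and `P = diag(p)` with
`p i = ±1` satisfies `P D = -D P`, then the supertrace of every positive power of the
Laplacian `D²` vanishes: `tr(P (D²)^m) = 0` for `m ≥ 1`; consequently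
`tr(P exp(-t D²)) = tr(P)` for all real `t`. -/
theorem mckean_singer
    (n : ℕ) (D : Matrix (Fin n) (Fin n) ℝ) (hD : D.IsSymm)
    (p : Fin n → ℝ) (hp : ∀ i, p i = 1 ∨ p i = -1)
    (P : Matrix (Fin n) (Fin n) ℝ) (hP : P = Matrix.diagonal p)
    (hPD : P * D = -(D * P)) :
    (∀ m : ℕ, 1 ≤ m → (P * (D * D) ^ m).trace = 0) ∧
    (∀ t : ℝ, (P * NormedSpace.exp (-(t • (D * D)))).trace = P.trace) :=
  mckean_singer_general n D P hPD
end

section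
/- Let D be a real symmetric n×n matrix and P a diagonal n×n matrix with diagonal entries ±1 satisfying P D = −D P. Let Π be the orthogonal projection of ℝⁿ onto the kernel of D. Then trace(P) = trace(P Π). Equivalently, the nonzero eigenvalues of D² are distributed equally between the +1 and −1 eigenspaces of P, counted with multiplicity. -/
/-!
A symmetric `D` has a generalized inverse `B` commuting with it (`D B D = D`; take `B = D⁻¹` on
the range of `D` and `0` on its kernel), so `1 - Π = (1 - Π) B D`. Cycling `D` to the front of the
trace and anticommuting it past `P` gives `tr (P (1 - Π)) = -tr (P D (1 - Π) B) = -tr (P D B)`,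
and the same manoeuvre shows `tr (P D B) = -tr (P D B)`, hence both vanish.
-/

open Matrix

theorem Matrix.IsHermitian.exists_commute_mul_mul_eq_self {𝕜 n : Type*} [RCLike 𝕜] [Fintype n]
    [DecidableEq n] {A : Matrix n n 𝕜} (hA : A.IsHermitian) :
    ∃ B, Commute A B ∧ A * B * A = A := by
  have hA : IsSelfAdjoint A := hA
  have hinv : ContinuousOn (·⁻¹ : ℝ → ℝ) (spectrum ℝ A) := finite_real_spectrum.continuousOn _
  refine ⟨cfc (·⁻¹ : ℝ → ℝ) A, ?_, ?_⟩
  · simpa only [cfc_id ℝ A hA] using cfc_commute_cfc id (·⁻¹ : ℝ → ℝ) A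
  · calc A * cfc (·⁻¹ : ℝ → ℝ) A * A = cfc (fun x : ℝ => x * x⁻¹ * x) A := by
          rw [cfc_mul _ _ A, cfc_mul _ _ A, cfc_id' ℝ A hA]
      _ = A := by simp only [mul_inv_mul_cancel, cfc_id' ℝ A hA]

namespace Matrix

variable {m R : Type*} [Fintype m] [CommRing R] {P D B E : Matrix m m R}

theorem trace_mul_mul_eq_neg_of_anticommute (hPD : P * D = -(D * P)) (X : Matrix m m R) :
    (P * X * D).trace = -(P * D * X).trace := by
  rw [trace_mul_cycle, ← neg_neg (D * P), ← hPD, neg_mul, trace_neg]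

theorem trace_mul_mul_eq_zero_of_anticommute [IsAddTorsionFree R] (hPD : P * D = -(D * P))
    (hDB : Commute D B) : (P * D * B).trace = 0 := by
  refine self_eq_neg.mp ?_
  rw [← trace_mul_mul_eq_neg_of_anticommute hPD, mul_assoc, hDB.eq, mul_assoc]

variable [DecidableEq m]

theorem mul_eq_zero_of_mulVec_eq_self_imp (hE : E * E = E)
    (hfix : ∀ v, E *ᵥ v = v → D *ᵥ v = 0) : D * E = 0 :=
  ext_of_mulVec_single fun i => by
    rw [← mulVec_mulVec, zero_mulVec]
    exact hfix _ (by rw [mulVec_mulVec, hE])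

theorem mul_eq_self_of_mulVec_eq_zero_imp (hker : ∀ v, D *ᵥ v = 0 → E *ᵥ v = v)
    {X : Matrix m m R} (hX : D * X = 0) : E * X = X :=
  ext_of_mulVec_single fun i => by
    rw [← mulVec_mulVec]
    exact hker _ (by rw [mulVec_mulVec, hX, zero_mulVec])

theorem trace_eq_trace_mul_of_anticommute [IsAddTorsionFree R] (hPD : P * D = -(D * P))
    (hDB : Commute D B) (hDBD : D * B * D = D) (hE : E * E = E)
    (hfix : ∀ v, E *ᵥ v = v ↔ D *ᵥ v = 0) : P.trace = (P * E).trace := by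
  have hDE : D * (1 - E) = D := by
    rw [mul_sub, mul_one, mul_eq_zero_of_mulVec_eq_self_imp hE fun v => (hfix v).mp, sub_zero]
  have hEBD : E * (1 - B * D) = 1 - B * D :=
    mul_eq_self_of_mulVec_eq_zero_imp (fun v => (hfix v).mpr)
      (by rw [mul_sub, mul_one, ← mul_assoc, hDBD, sub_self])
  have hBD : (1 - E) * B * D = 1 - E := by
    calc (1 - E) * B * D = (1 - E) - ((1 - B * D) - E * (1 - B * D)) := by noncomm_ring
      _ = 1 - E := by rw [hEBD, sub_self, sub_zero]
  rw [← sub_eq_zero, ← trace_sub, ← mul_one_sub]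
  calc (P * (1 - E)).trace = (P * ((1 - E) * B) * D).trace := by rw [mul_assoc P, hBD]
    _ = -(P * D * B).trace := by
      rw [trace_mul_mul_eq_neg_of_anticommute hPD, mul_assoc P D, ← mul_assoc D, hDE, mul_assoc]
    _ = 0 := by rw [trace_mul_mul_eq_zero_of_anticommute hPD hDB, neg_zero]

end Matrix

theorem supertrace_eq_supertrace_kernel_projection_general
    (n : ℕ) (D : Matrix (Fin n) (Fin n) ℝ) (hD : D.IsSymm)
    (P : Matrix (Fin n) (Fin n) ℝ)
    (hPD : P * D = -(D * P))
    (Pi : Matrix (Fin n) (Fin n) ℝ)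
    (hPi_idem : Pi * Pi = Pi)
    (hPi_range : ∀ v : Fin n → ℝ, Pi.mulVec v = v ↔ D.mulVec v = 0) :
    P.trace = (P * Pi).trace := by
  obtain ⟨B, hDB, hDBD⟩ := (isHermitian_iff_isSymm.mpr hD).exists_commute_mul_mul_eq_self
  exact trace_eq_trace_mul_of_anticommute hPD hDB hDBD hPi_idem hPi_range

/-- **Euler characteristic equals supertrace of the kernel projection.**
If `D` is real symmetric, `P = diag(p)` with `p i = ±1` satisfies `P D = -D P`, and
`Π` is the orthogonal projection onto `ker D` (characterized as the symmetric
idempotent matrix whose fixed vectors are exactly the kernel of `D`), then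
`tr(P) = tr(P Π)`. -/
theorem supertrace_eq_supertrace_kernel_projection
    (n : ℕ) (D : Matrix (Fin n) (Fin n) ℝ) (hD : D.IsSymm)
    (p : Fin n → ℝ) (hp : ∀ i, p i = 1 ∨ p i = -1)
    (P : Matrix (Fin n) (Fin n) ℝ) (hP : P = Matrix.diagonal p)
    (hPD : P * D = -(D * P))
    (Pi : Matrix (Fin n) (Fin n) ℝ)
    (hPi_symm : Pi.IsSymm) (hPi_idem : Pi * Pi = Pi)
    (hPi_range : ∀ v : Fin n → ℝ, Pi.mulVec v = v ↔ D.mulVec v = 0) :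
    P.trace = (P * Pi).trace :=
  supertrace_eq_supertrace_kernel_projection_general n D hD P hPD Pi hPi_idem hPi_range
end

section
/- Let G be a finite abstract simplicial complex with Hodge Laplacian L = D², where D is the Dirac matrix. Let f_k denote the number of elements of G of cardinality k+1, and let b_k denote the dimension of the kernel of the k-form block L_k of L (the block of L indexed by the elements of cardinality k+1). Then the Euler–Poincaré formula holds: Σ_k (−1)^k f_k = Σ_k (−1)^k b_k. -/
open Matrix

/-- The `k`-form block of the Hodge Laplacian: the submatrix of `L` indexed by the
simplices of cardinality `k + 1`. -/
noncomputable def formBlock (G : Finset (Finset ℕ)) (k : ℕ) :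
    Matrix {x // x ∈ G.filter fun s => s.card = k + 1}
           {x // x ∈ G.filter fun s => s.card = k + 1} ℝ :=
  Matrix.of fun x y =>
    hodge G ⟨x.1, (Finset.mem_filter.mp x.2).1⟩ ⟨y.1, (Finset.mem_filter.mp y.2).1⟩

/-- `f_k`: the number of simplices of cardinality `k + 1`. -/
def fVec (G : Finset (Finset ℕ)) (k : ℕ) : ℕ :=
  (G.filter fun s => s.card = k + 1).card

/-- `b_k`: the dimension of the kernel of the `k`-form block of the Hodge Laplacian. -/
noncomputable def bVec (G : Finset (Finset ℕ)) (k : ℕ) : ℕ :=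
  Module.finrank ℝ (LinearMap.ker (formBlock G k).mulVecLin)

/-!
Let `dₖ` be the part of `d` from the simplices of cardinality `k` to those of cardinality `k + 1`.
On a simplicial complex `dₖ₊₁ dₖ = 0`: a face of `x` missing the vertices at positions `p < q`
arises from the two faces missing one of them, with signs `(-1)^(p + q - 1)` and `(-1)^(q + p)`.
By the grading, `L_k = dₖ₊₁ᵀ dₖ₊₁ + dₖ dₖᵀ`, whose kernel is `ker dₖ₊₁ ∩ ker dₖᵀ`; as
`range dₖ ⊆ ker dₖ₊₁`, it has dimension `f_k - rank dₖ₊₁ - rank dₖ`. Since `d₀ = 0` (there is no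
empty simplex) and the block above the top dimension is empty, `Σ (-1)^k (f_k - b_k)` telescopes
to zero.
-/

open Finset

section LinearAlgebra

variable {R : Type*} [Field R] [LinearOrder R] [IsStrictOrderedRing R]
  {l m n : Type*} [Fintype l] [Fintype m] [Fintype n]

theorem Matrix.ker_mulVecLin_transpose_mul_self_add_mul_transpose
    (A : Matrix l m R) (B : Matrix m n R) :
    LinearMap.ker (Aᵀ * A + B * Bᵀ).mulVecLin
      = LinearMap.ker A.mulVecLin ⊓ LinearMap.ker Bᵀ.mulVecLin := by
  ext v
  simp only [LinearMap.mem_ker, Submodule.mem_inf, mulVecLin_apply]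
  constructor
  · intro h
    have hv : A *ᵥ v ⬝ᵥ A *ᵥ v + Bᵀ *ᵥ v ⬝ᵥ Bᵀ *ᵥ v = 0 := by
      have := congr_arg (v ⬝ᵥ ·) h
      rwa [add_mulVec, ← mulVec_mulVec, ← mulVec_mulVec, dotProduct_add, dotProduct_mulVec v Aᵀ,
        vecMul_transpose, dotProduct_mulVec v B, ← mulVec_transpose, dotProduct_zero] at this
    obtain ⟨hA, hB⟩ := (add_eq_zero_iff_of_nonneg
      (sum_nonneg fun i _ => mul_self_nonneg _) (sum_nonneg fun i _ => mul_self_nonneg _)).mp hv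
    exact ⟨dotProduct_self_eq_zero.mp hA, dotProduct_self_eq_zero.mp hB⟩
  · rintro ⟨hA, hB⟩
    rw [add_mulVec, ← mulVec_mulVec, ← mulVec_mulVec, hA, hB, mulVec_zero, mulVec_zero, add_zero]

theorem Matrix.finrank_map_transpose_of_range_le {B : Matrix m n R}
    {K : Submodule R (m → R)} (hBK : LinearMap.range B.mulVecLin ≤ K) :
    Module.finrank R (K.map Bᵀ.mulVecLin) = B.rank := by
  refine le_antisymm ?_ ?_
  · calc Module.finrank R (K.map Bᵀ.mulVecLin)
        ≤ Module.finrank R (LinearMap.range Bᵀ.mulVecLin) :=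
          Submodule.finrank_mono LinearMap.map_le_range
      _ = B.rank := rank_transpose B
  · have hle : LinearMap.range (Bᵀ * B).mulVecLin ≤ K.map Bᵀ.mulVecLin := by
      rw [mulVecLin_mul, LinearMap.range_comp]
      exact Submodule.map_mono hBK
    calc B.rank = (Bᵀ * B).rank := (rank_transpose_mul_self B).symm
      _ ≤ Module.finrank R (K.map Bᵀ.mulVecLin) := Submodule.finrank_mono hle

theorem Matrix.finrank_ker_transpose_mul_self_add_mul_transpose_add_rank_add_rank
    {A : Matrix l m R} {B : Matrix m n R} (hAB : A * B = 0) :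
    Module.finrank R (LinearMap.ker (Aᵀ * A + B * Bᵀ).mulVecLin) + A.rank + B.rank
      = Fintype.card m := by
  set K := LinearMap.ker A.mulVecLin
  have hBK : LinearMap.range B.mulVecLin ≤ K := by
    rintro _ ⟨w, rfl⟩
    simp [K, mulVec_mulVec, hAB]
  set φ := Bᵀ.mulVecLin.domRestrict K
  have hφrange : Module.finrank R (LinearMap.range φ) = B.rank := by
    rw [LinearMap.range_domRestrict]
    exact finrank_map_transpose_of_range_le hBK
  have hφker : Module.finrank R (LinearMap.ker φ)
      = Module.finrank R (LinearMap.ker (Aᵀ * A + B * Bᵀ).mulVecLin) := by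
    rw [ker_mulVecLin_transpose_mul_self_add_mul_transpose, LinearMap.ker_domRestrict,
      ← Submodule.finrank_map_subtype_eq, Submodule.map_comap_subtype]
  have hφ := LinearMap.finrank_range_add_finrank_ker φ
  have hA := LinearMap.finrank_range_add_finrank_ker A.mulVecLin
  rw [Module.finrank_fintype_fun_eq_card] at hA
  change A.rank + Module.finrank R K = _ at hA
  omega

end LinearAlgebra

theorem Finset.sum_range_neg_one_pow_mul_eq_of_eq_add {R : Type*} [CommRing R]
    {f b r : ℕ → R} {m : ℕ} (h : ∀ k < m, f k = b k + r (k + 1) + r k) (h0 : r 0 = 0)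
    (hm : r m = 0) :
    ∑ k ∈ range m, (-1) ^ k * f k = ∑ k ∈ range m, (-1) ^ k * b k := by
  rw [← sub_eq_zero, ← sum_sub_distrib]
  calc ∑ k ∈ range m, ((-1) ^ k * f k - (-1) ^ k * b k)
      = ∑ k ∈ range m, ((-1) ^ k * r k - (-1) ^ (k + 1) * r (k + 1)) :=
        sum_congr rfl fun k hk => by rw [h k (mem_range.mp hk)]; ring
    _ = 0 := by rw [sum_range_sub' (fun k => (-1) ^ k * r k), h0, hm]; simp

theorem Finset.sum_coe_filter_of_ne {α M : Type*} [AddCommMonoid M] {s : Finset α}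
    {p : α → Prop} [DecidablePred p] {f : α → M} (hf : ∀ z ∈ s, f z ≠ 0 → p z) :
    ∑ z : {z // z ∈ s.filter p}, f z = ∑ z : {z // z ∈ s}, f z := by
  rw [sum_coe_sort, sum_coe_sort, sum_filter_of_ne hf]

theorem subset_and_card_eq_of_dEntry_ne_zero {x y : Finset ℕ} (h : dEntry x y ≠ 0) :
    y ⊆ x ∧ x.card = y.card + 1 := by
  by_contra hc
  exact h (if_neg hc)

theorem exists_eq_erase_of_dEntry_ne_zero {x y : Finset ℕ} (h : dEntry x y ≠ 0) :
    ∃ a ∈ x, y = x.erase a := by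
  obtain ⟨hyx, hcard⟩ := subset_and_card_eq_of_dEntry_ne_zero h
  obtain ⟨a, ha⟩ := card_eq_one.mp (by rw [card_sdiff_of_subset hyx]; omega :
    (x \ y).card = 1)
  refine ⟨a, (mem_sdiff.mp (ha ▸ mem_singleton_self a)).1, ?_⟩
  rw [erase_eq, ← ha, Finset.sdiff_sdiff_eq_self hyx]

theorem dEntry_mul_dEntry_eq_zero_of_card_eq {x y : Finset ℕ} (z : Finset ℕ)
    (hxy : x.card = y.card) : dEntry x z * dEntry z y = 0 := by
  by_contra h
  have hxz := (subset_and_card_eq_of_dEntry_ne_zero (left_ne_zero_of_mul h)).2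
  have hzy := (subset_and_card_eq_of_dEntry_ne_zero (right_ne_zero_of_mul h)).2
  omega

theorem dEntry_erase {x : Finset ℕ} {a : ℕ} (ha : a ∈ x) :
    dEntry x (x.erase a) = (-1) ^ (x.filter (· < a)).card := by
  have hcard : x.card = (x.erase a).card + 1 := (card_erase_add_one ha).symm
  rw [dEntry, if_pos ⟨erase_subset a x, hcard⟩, sdiff_erase_self ha, sum_singleton]

theorem dEntry_erase_mul_add_dEntry_erase_mul {x : Finset ℕ} {a b : ℕ} (ha : a ∈ x)
    (hb : b ∈ x) (hab : a < b) :
    dEntry x (x.erase a) * dEntry (x.erase a) ((x.erase a).erase b)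
      + dEntry x (x.erase b) * dEntry (x.erase b) ((x.erase a).erase b) = 0 := by
  have hpos_b : (x.filter (· < b)).card = ((x.erase a).filter (· < b)).card + 1 := by
    rw [filter_erase, card_erase_add_one (mem_filter.mpr ⟨ha, hab⟩)]
  have hpos_a : (x.erase b).filter (· < a) = x.filter (· < a) := by
    rw [filter_erase, erase_eq_of_notMem]
    simp [hab.le]
  rw [dEntry_erase (mem_erase.mpr ⟨hab.ne', hb⟩), erase_right_comm, dEntry_erase ha,
    dEntry_erase hb, dEntry_erase (mem_erase.mpr ⟨hab.ne, ha⟩), hpos_a, hpos_b]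
  ring

theorem sum_dEntry_mul_dEntry_erase_erase {S : Finset (Finset ℕ)} {x : Finset ℕ} {a b : ℕ}
    (ha : a ∈ x) (hb : b ∈ x) (hab : a ≠ b) (haS : x.erase a ∈ S) (hbS : x.erase b ∈ S) :
    ∑ y ∈ S, dEntry x y * dEntry y ((x.erase a).erase b) = 0 := by
  wlog hlt : a < b generalizing a b
  · rw [erase_right_comm]
    exact this hb ha hab.symm hbS haS (lt_of_le_of_ne (not_lt.mp hlt) hab.symm)
  have hne : x.erase a ≠ x.erase b := fun h =>
    notMem_erase a x (h ▸ mem_erase.mpr ⟨hab, ha⟩)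
  rw [sum_eq_add_of_mem _ _ haS hbS hne, dEntry_erase_mul_add_dEntry_erase_mul ha hb hlt]
  intro y _ ⟨hya, hyb⟩
  by_contra h
  obtain ⟨c, hc, rfl⟩ := exists_eq_erase_of_dEntry_ne_zero (left_ne_zero_of_mul h)
  have hsub := (subset_and_card_eq_of_dEntry_ne_zero (right_ne_zero_of_mul h)).1
  have hca : c ≠ a := fun hca => hya (hca ▸ rfl)
  have hcb : c ≠ b := fun hcb => hyb (hcb ▸ rfl)
  exact notMem_erase c x (hsub (by simp [hc, hca, hcb]))

noncomputable def extDerBlock (G : Finset (Finset ℕ)) (k : ℕ) :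
    Matrix {x // x ∈ G.filter fun s => s.card = k + 1}
      {x // x ∈ G.filter fun s => s.card = k} ℝ :=
  Matrix.of fun x y => dEntry x.1 y.1

theorem extDerBlock_succ_mul_extDerBlock {G : Finset (Finset ℕ)} (hG : IsComplex G) (k : ℕ) :
    extDerBlock G (k + 1) * extDerBlock G k = 0 := by
  ext x z
  obtain ⟨hxG, hxc⟩ := mem_filter.mp x.2
  have hzc := (mem_filter.mp z.2).2
  simp only [mul_apply, Matrix.zero_apply, extDerBlock, of_apply]
  rw [sum_coe_sort (G.filter fun s => s.card = k + 1) fun y => dEntry x.1 y * dEntry y z.1]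
  by_cases hzx : z.1 ⊆ x.1
  · obtain ⟨a, b, hab, hxz⟩ := card_eq_two.mp
      (by rw [card_sdiff_of_subset hzx]; omega : (x.1 \ z.1).card = 2)
    have ha : a ∈ x.1 := (mem_sdiff.mp (hxz ▸ mem_insert_self a {b})).1
    have hb : b ∈ x.1 := (mem_sdiff.mp (hxz ▸ mem_insert_of_mem (mem_singleton_self b))).1
    have hz : z.1 = (x.1.erase a).erase b := by
      rw [← Finset.sdiff_sdiff_eq_self hzx, hxz, sdiff_insert, ← erase_eq, erase_right_comm]
    have hface {c : ℕ} (hc : c ∈ x.1) : x.1.erase c ∈ G.filter fun s => s.card = k + 1 := by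
      have hcard : (x.1.erase c).card = k + 1 := by rw [card_erase_of_mem hc]; omega
      exact mem_filter.mpr ⟨hG.2 _ hxG _ (erase_subset c x.1) (card_pos.mp (by omega)), hcard⟩
    rw [hz]
    exact sum_dEntry_mul_dEntry_erase_erase ha hb hab (hface ha) (hface hb)
  · refine sum_eq_zero fun y _ => ?_
    by_contra h
    exact hzx ((subset_and_card_eq_of_dEntry_ne_zero (right_ne_zero_of_mul h)).1.trans
      (subset_and_card_eq_of_dEntry_ne_zero (left_ne_zero_of_mul h)).1)

theorem formBlock_eq (G : Finset (Finset ℕ)) (k : ℕ) :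
    formBlock G k = (extDerBlock G (k + 1))ᵀ * extDerBlock G (k + 1)
      + extDerBlock G k * (extDerBlock G k)ᵀ := by
  ext x y
  have hxc := (mem_filter.mp x.2).2
  have hyc := (mem_filter.mp y.2).2
  simp only [formBlock, hodge, dirac, extDer, extDerBlock, of_apply, Matrix.add_apply, mul_apply,
    transpose_apply]
  rw [sum_coe_filter_of_ne (f := fun z => dEntry z x.1 * dEntry z y.1) fun z _ h => ?up,
    sum_coe_filter_of_ne (f := fun z => dEntry x.1 z * dEntry y.1 z) fun z _ h => ?down,
    ← sum_add_distrib]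
  case up => rw [(subset_and_card_eq_of_dEntry_ne_zero (left_ne_zero_of_mul h)).2, hxc]
  case down => have := (subset_and_card_eq_of_dEntry_ne_zero (left_ne_zero_of_mul h)).2; omega
  refine sum_congr rfl fun z _ => ?_
  linear_combination dEntry_mul_dEntry_eq_zero_of_card_eq z.1 (hxc.trans hyc.symm)
    + dEntry_mul_dEntry_eq_zero_of_card_eq z.1 (hyc.trans hxc.symm)

theorem bVec_add_rank_add_rank {G : Finset (Finset ℕ)} (hG : IsComplex G) (k : ℕ) :
    bVec G k + (extDerBlock G (k + 1)).rank + (extDerBlock G k).rank = fVec G k := by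
  have h := finrank_ker_transpose_mul_self_add_mul_transpose_add_rank_add_rank
    (extDerBlock_succ_mul_extDerBlock hG k)
  rwa [← formBlock_eq, Fintype.card_coe] at h

theorem rank_extDerBlock_zero {G : Finset (Finset ℕ)} (hG : IsComplex G) :
    (extDerBlock G 0).rank = 0 := by
  have hempty : (G.filter fun s => s.card = 0).card = 0 :=
    card_eq_zero.mpr (filter_eq_empty_iff.mpr fun x hx => (hG.1 x hx).card_pos.ne')
  have h := rank_le_card_width (extDerBlock G 0)
  rw [Fintype.card_coe] at h
  omega

theorem rank_extDerBlock_sup_card (G : Finset (Finset ℕ)) :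
    (extDerBlock G (G.sup card)).rank = 0 := by
  have hempty : (G.filter fun s => s.card = G.sup card + 1).card = 0 :=
    card_eq_zero.mpr (filter_eq_empty_iff.mpr fun x hx => by have := le_sup (f := card) hx; omega)
  have h := rank_le_card_height (extDerBlock G (G.sup card))
  rw [Fintype.card_coe] at h
  omega

/-- **Euler–Poincaré formula**: `Σ_k (-1)^k f_k = Σ_k (-1)^k b_k`. -/
theorem euler_poincare (G : Finset (Finset ℕ)) (hG : IsComplex G) :
    ∑ k ∈ Finset.range (G.sup Finset.card), (-1 : ℤ) ^ k * (fVec G k : ℤ) =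
      ∑ k ∈ Finset.range (G.sup Finset.card), (-1 : ℤ) ^ k * (bVec G k : ℤ) :=
  sum_range_neg_one_pow_mul_eq_of_eq_add (r := fun k => ((extDerBlock G k).rank : ℤ))
    (fun k _ => by rw [← bVec_add_rank_add_rank hG k]; push_cast; ring)
    (by simp [rank_extDerBlock_zero hG]) (by simp [rank_extDerBlock_sup_card])
end

section
/- Let K ⊆ G be finite abstract simplicial complexes. Then the traces of the Hodge Laplacians satisfy trace(L(K)) ≤ trace(L(G)), and the forest quantities satisfy det(I + L(K)) ≤ det(I + L(G)). -/
open Matrix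

/-!
The Dirac matrix `D_K` of a subcomplex is the principal submatrix of `D_G` on the simplices of `K`,
since the entries of `d` depend only on the two simplices.  As `D` is symmetric, `tr D²` is the
sum of the squares of the entries of `D`, which can only grow when passing to `D_G`.

For the determinant write `D_K = E D_G Eᴴ` with `E Eᴴ = 1`, so that `P = Eᴴ E` satisfies
`0 ≤ P ≤ 1`.  Then `D_K² = (E D_G) P (E D_G)ᴴ`, and Sylvester's identity
`det (1 + X Y) = det (1 + Y X)` together with the monotonicity of `det (1 + ·)` in the Loewner order
gives `det (1 + D_K²) ≤ det (1 + E D_G² Eᴴ) = det (1 + D_G P D_G) ≤ det (1 + D_G²)`.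
-/

namespace Matrix

section Determinant

variable {𝕜 m n : Type*} [RCLike 𝕜] [Fintype m] [Fintype n] [DecidableEq m] [DecidableEq n]

open scoped ComplexOrder

theorem PosSemidef.one_le_det_one_add {R : Matrix n n 𝕜} (hR : R.PosSemidef) :
    1 ≤ (1 + R).det := by
  rw [hR.isHermitian.spectral_theorem, Unitary.conjStarAlgAut_apply, Matrix.mul_assoc,
    det_one_add_mul_comm, Matrix.mul_assoc, Unitary.coe_star_mul_self, Matrix.mul_one,
    ← diagonal_one, diagonal_add, det_diagonal]
  exact Finset.one_le_prod fun i _ => by simpa using hR.eigenvalues_nonneg i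

open scoped MatrixOrder in
theorem PosDef.det_le_det_add {S R : Matrix n n 𝕜} (hS : S.PosDef) (hR : R.PosSemidef) :
    S.det ≤ (S + R).det := by
  obtain ⟨B, rfl⟩ := CStarAlgebra.nonneg_iff_eq_star_mul_self.mp hR.nonneg
  -- `S + Bᴴ B = S (1 + S⁻¹ Bᴴ B)`, and by Sylvester the last factor may be replaced by the
  -- positive semidefinite `1 + B S⁻¹ Bᴴ`.
  have hC : (B * S⁻¹ * Bᴴ).PosSemidef := hS.inv.posSemidef.mul_mul_conjTranspose_same B
  calc S.det = S.det * 1 := (mul_one _).symm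
    _ ≤ S.det * (1 + B * S⁻¹ * Bᴴ).det :=
      mul_le_mul_of_nonneg_left hC.one_le_det_one_add hS.det_pos.le
    _ = (S + star B * B).det := by
      rw [Matrix.mul_assoc, det_one_add_mul_comm, ← det_mul, Matrix.mul_add, Matrix.mul_one,
        Matrix.mul_assoc, mul_nonsing_inv_cancel_left _ _ hS.det_pos.ne'.isUnit,
        star_eq_conjTranspose]

theorem det_one_add_mul_mul_conjTranspose_le (X : Matrix m n 𝕜) {P : Matrix n n 𝕜}
    (hP : P.PosSemidef) (hP' : (1 - P).PosSemidef) :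
    (1 + X * P * Xᴴ).det ≤ (1 + X * Xᴴ).det := by
  have h := (PosDef.one.add_posSemidef (hP.mul_mul_conjTranspose_same X)).det_le_det_add
    (hP'.mul_mul_conjTranspose_same X)
  rwa [add_assoc, ← Matrix.add_mul, ← Matrix.mul_add, add_sub_cancel, Matrix.mul_one] at h

theorem posSemidef_one_sub_conjTranspose_mul_self {E : Matrix m n 𝕜} (hE : E * Eᴴ = 1) :
    (1 - Eᴴ * E).PosSemidef := by
  have hidem : Eᴴ * E * (Eᴴ * E) = Eᴴ * E := by
    rw [Matrix.mul_assoc, ← Matrix.mul_assoc E, hE, Matrix.one_mul]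
  convert posSemidef_conjTranspose_mul_self (1 - Eᴴ * E) using 1
  rw [conjTranspose_sub, conjTranspose_one, conjTranspose_mul, conjTranspose_conjTranspose,
    sub_mul, mul_sub, mul_sub, hidem]
  simp

theorem IsHermitian.det_one_add_compression_mul_self_le {A : Matrix n n 𝕜} (hA : A.IsHermitian)
    {E : Matrix m n 𝕜} (hE : E * Eᴴ = 1) :
    (1 + E * A * Eᴴ * (E * A * Eᴴ)).det ≤ (1 + A * A).det := by
  have hP := posSemidef_conjTranspose_mul_self E
  have hP' := posSemidef_one_sub_conjTranspose_mul_self hE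
  calc (1 + E * A * Eᴴ * (E * A * Eᴴ)).det = (1 + E * A * (Eᴴ * E) * (E * A)ᴴ).det := by
        rw [conjTranspose_mul, hA.eq]; simp only [Matrix.mul_assoc]
    _ ≤ (1 + E * A * (E * A)ᴴ).det := det_one_add_mul_mul_conjTranspose_le _ hP hP'
    _ = (1 + A * (A * (Eᴴ * E))).det := by
      rw [conjTranspose_mul, hA.eq, Matrix.mul_assoc, det_one_add_mul_comm]
      simp only [Matrix.mul_assoc]
    _ = (1 + A * (Eᴴ * E) * Aᴴ).det := by rw [hA.eq, det_one_add_mul_comm]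
    _ ≤ (1 + A * Aᴴ).det := det_one_add_mul_mul_conjTranspose_le _ hP hP'
    _ = (1 + A * A).det := by rw [hA.eq]

theorem IsHermitian.det_one_add_submatrix_mul_self_le {A : Matrix n n 𝕜} (hA : A.IsHermitian)
    {f : m → n} (hf : Function.Injective f) :
    (1 + A.submatrix f f * A.submatrix f f).det ≤ (1 + A * A).det := by
  set E : Matrix m n 𝕜 := (1 : Matrix n n 𝕜).submatrix f id
  have hEH : Eᴴ = (1 : Matrix n n 𝕜).submatrix id f := by simp [E]
  have hE : E * Eᴴ = 1 := by
    rw [hEH, ← submatrix_mul _ _ _ _ _ Function.bijective_id, Matrix.mul_one, submatrix_one _ hf]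
  have hAE : A.submatrix f f = E * A * Eᴴ := by
    ext i j; simp [E, hEH, Matrix.mul_apply, Matrix.one_apply]
  simpa only [hAE] using hA.det_one_add_compression_mul_self_le hE

end Determinant

section Trace

variable {m n : Type*} [Fintype m] [Fintype n]

theorem IsSymm.trace_mul_self_eq_sum_sq {B : Matrix n n ℝ} (hB : B.IsSymm) :
    (B * B).trace = ∑ i, ∑ j, B i j ^ 2 := by
  simp only [trace, diag, mul_apply, hB.apply, sq]

theorem IsSymm.trace_submatrix_mul_self_le {A : Matrix n n ℝ} (hA : A.IsSymm) {f : m → n}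
    (hf : Function.Injective f) :
    (A.submatrix f f * A.submatrix f f).trace ≤ (A * A).trace := by
  rw [(hA.submatrix f).trace_mul_self_eq_sum_sq, hA.trace_mul_self_eq_sum_sq,
    ← Fintype.sum_prod_type', ← Fintype.sum_prod_type']
  calc ∑ p : m × m, A (f p.1) (f p.2) ^ 2
      = ∑ q ∈ Finset.univ.map ⟨Prod.map f f, hf.prodMap hf⟩, A q.1 q.2 ^ 2 := by
        rw [Finset.sum_map]; rfl
    _ ≤ ∑ q : n × n, A q.1 q.2 ^ 2 :=
        Finset.sum_le_univ_sum_of_nonneg fun _ => sq_nonneg _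

end Trace

end Matrix

theorem dirac_isSymm (G : Finset (Finset ℕ)) : (dirac G).IsSymm := by
  rw [IsSymm, dirac, transpose_add, transpose_transpose, add_comm]

theorem dirac_eq_submatrix {K G : Finset (Finset ℕ)} (hKG : K ⊆ G) :
    dirac K = (dirac G).submatrix (Subtype.impEmbedding _ _ hKG) (Subtype.impEmbedding _ _ hKG) :=
  rfl

theorem trace_and_forest_monotone_general (K G : Finset (Finset ℕ))
    (hKG : K ⊆ G) :
    (hodge K).trace ≤ (hodge G).trace ∧
    (1 + hodge K).det ≤ (1 + hodge G).det := by
  have hinj := (Subtype.impEmbedding _ _ hKG).injective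
  have hD := dirac_isSymm G
  rw [hodge, hodge, dirac_eq_submatrix hKG]
  exact ⟨hD.trace_submatrix_mul_self_le hinj,
    (isHermitian_iff_isSymm.mpr hD).det_one_add_submatrix_mul_self_le hinj⟩

/-- **Monotonicity of total energy and of the forest quantity.**  If `K ⊆ G` are finite
abstract simplicial complexes, then `tr(L(K)) ≤ tr(L(G))` and
`det(I + L(K)) ≤ det(I + L(G))`. -/
theorem trace_and_forest_monotone (K G : Finset (Finset ℕ))
    (hK : IsComplex K) (hG : IsComplex G) (hKG : K ⊆ G) :
    (hodge K).trace ≤ (hodge G).trace ∧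
    (1 + hodge K).det ≤ (1 + hodge G).det :=
  trace_and_forest_monotone_general K G hKG
end

section
/- Let K ⊆ G be finite abstract simplicial complexes and fix k ≥ 0. Let L_k(K) and L_k(G) be the k-form blocks of the Hodge Laplacians of K and G, of sizes f_k(K) × f_k(K) and f_k(G) × f_k(G) respectively, where f_k counts the elements of cardinality k+1. Then f_k(K) ≤ f_k(G) and the left-padded eigenvalue sequences satisfy: for every 1 ≤ j ≤ f_k(K), the j-th smallest eigenvalue of L_k(K) is at most the (f_k(G) − f_k(K) + j)-th smallest eigenvalue of L_k(G). -/
open Matrix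

/-!
Both Laplacian blocks are Gram matrices: `L_k(H) = Cᵀ C`, where `C` is the Dirac matrix of `H`
restricted to the columns of the `k`-simplices, so `⟪L_k(H) v, v⟫ = ‖C v‖²`. The entries of the
Dirac matrix do not depend on the ambient complex, so extending a `k`-form `v` on `K` by zero to
`G` turns `C_K v` into a restriction of `C_G v`, whence `⟪L_k(K) v, v⟫ ≤ ⟪L_k(G) v, v⟫` (the
right side evaluated at the extended form). Courant–Fischer then compares the eigenvalues: the
`i`-th largest eigenvalue of `L_k(K)` is at most the `i`-th largest one of `L_k(G)`.
-/

open Module RealInnerProductSpace Function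

namespace LinearMap.IsSymmetric

variable {E F : Type*} [NormedAddCommGroup E] [InnerProductSpace ℝ E] [FiniteDimensional ℝ E]
  [NormedAddCommGroup F] [InnerProductSpace ℝ F] [FiniteDimensional ℝ F]
  {T : E →ₗ[ℝ] E} {S : F →ₗ[ℝ] F} {M N : ℕ}

theorem inner_apply_self_eq_sum (hT : T.IsSymmetric) (hM : finrank ℝ E = M) (v : E) :
    ⟪T v, v⟫ = ∑ l, hT.eigenvalues hM l * ⟪hT.eigenvectorBasis hM l, v⟫ ^ 2 := by
  rw [← (hT.eigenvectorBasis hM).sum_inner_mul_inner]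
  refine Finset.sum_congr rfl fun l _ => ?_
  rw [hT, apply_eigenvectorBasis, real_inner_smul_right, real_inner_comm]
  simp [sq, mul_assoc]

theorem eigenvalues_mul_norm_sq_le_inner (hT : T.IsSymmetric) (hM : finrank ℝ E = M)
    {i : Fin M} {v : E} (hv : ∀ l, i < l → ⟪hT.eigenvectorBasis hM l, v⟫ = 0) :
    hT.eigenvalues hM i * ‖v‖ ^ 2 ≤ ⟪T v, v⟫ := by
  rw [inner_apply_self_eq_sum, ← (hT.eigenvectorBasis hM).sum_sq_inner_right, Finset.mul_sum]
  refine Finset.sum_le_sum fun l _ => ?_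
  rcases le_or_gt l i with hli | hil
  · exact mul_le_mul_of_nonneg_right (hT.eigenvalues_antitone hM hli) (sq_nonneg _)
  · simp [hv l hil]

theorem inner_le_eigenvalues_mul_norm_sq (hT : T.IsSymmetric) (hM : finrank ℝ E = M)
    {i : Fin M} {v : E} (hv : ∀ l < i, ⟪hT.eigenvectorBasis hM l, v⟫ = 0) :
    ⟪T v, v⟫ ≤ hT.eigenvalues hM i * ‖v‖ ^ 2 := by
  rw [inner_apply_self_eq_sum, ← (hT.eigenvectorBasis hM).sum_sq_inner_right, Finset.mul_sum]
  refine Finset.sum_le_sum fun l _ => ?_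
  rcases le_or_gt i l with hil | hli
  · exact mul_le_mul_of_nonneg_right (hT.eigenvalues_antitone hM hil) (sq_nonneg _)
  · simp [hv l hli]

theorem eigenvalues_le_of_inner_le_s11 (hT : T.IsSymmetric) (hS : S.IsSymmetric)
    (hM : finrank ℝ E = M) (hN : finrank ℝ F = N) (hMN : M ≤ N) (ι : E →ₗᵢ[ℝ] F)
    (hTS : ∀ v, ⟪T v, v⟫ ≤ ⟪S (ι v), ι v⟫) (i : Fin M) :
    hT.eigenvalues hM i ≤ hS.eigenvalues hN (Fin.castLE hMN i) := by
  set b := hT.eigenvectorBasis hM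
  set c := hS.eigenvectorBasis hN
  -- `M - 1` linear conditions on `v`: no component along the eigenvectors of `T` after `i`,
  -- and `ι v` has no component along the eigenvectors of `S` before `i`.
  let ψ : E →ₗ[ℝ] (Finset.Ioi i → ℝ) × (Finset.Iio (Fin.castLE hMN i) → ℝ) :=
    (LinearMap.pi fun l : Finset.Ioi i => innerₛₗ ℝ (b l)).prod
      (LinearMap.pi fun l : Finset.Iio (Fin.castLE hMN i) => (innerₛₗ ℝ (c l)).comp ι.toLinearMap)
  have hdim :
      finrank ℝ ((Finset.Ioi i → ℝ) × (Finset.Iio (Fin.castLE hMN i) → ℝ)) < finrank ℝ E := by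
    simp only [finrank_prod, finrank_fintype_fun_eq_card, Fintype.card_coe, Fin.card_Ioi,
      Fin.card_Iio, Fin.val_castLE, hM]
    omega
  obtain ⟨v, hv, hv0⟩ :=
    (Submodule.ne_bot_iff _).mp (LinearMap.ker_ne_bot_of_finrank_lt (f := ψ) hdim)
  rw [LinearMap.mem_ker] at hv
  have hvb : ∀ l, i < l → ⟪b l, v⟫ = 0 := fun l hl =>
    congr($hv.1 ⟨l, Finset.mem_Ioi.mpr hl⟩)
  have hvc : ∀ l < Fin.castLE hMN i, ⟪c l, ι v⟫ = 0 := fun l hl =>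
    congr($hv.2 ⟨l, Finset.mem_Iio.mpr hl⟩)
  have hpos : 0 < ‖v‖ ^ 2 := by positivity
  have := (eigenvalues_mul_norm_sq_le_inner hT hM hvb).trans <| (hTS v).trans <|
    inner_le_eigenvalues_mul_norm_sq hS hN hvc
  rw [ι.norm_map] at this
  exact le_of_mul_le_mul_right this hpos

end LinearMap.IsSymmetric

namespace Matrix.IsHermitian

variable {n : Type*} [Fintype n] [DecidableEq n] {A : Matrix n n ℝ}

theorem sortedEigs_eq_ofFn (hA : A.IsHermitian) :
    sortedEigs A = List.ofFn (hA.eigenvalues₀ ∘ Fin.rev) := by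
  have hmap : Finset.univ.val.map hA.eigenvalues = List.ofFn (hA.eigenvalues₀ ∘ Fin.rev) := by
    have hrev : Fin.rev = ⇑(Fin.revPerm (n := Fintype.card n)) := rfl
    have heig : hA.eigenvalues =
        hA.eigenvalues₀ ∘ (Fintype.equivOfCardEq (Fintype.card_fin _)).symm := rfl
    rw [← Fin.univ_val_map, ← Multiset.map_map, hrev, Multiset.map_univ_val_equiv, heig,
      ← Multiset.map_map, Multiset.map_univ_val_equiv]
  rw [sortedEigs, dif_pos hA, hmap, Multiset.coe_sort]
  apply List.mergeSort_of_pairwise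
  simp_rw [decide_eq_true_eq, ← List.sortedLE_iff_pairwise]
  exact (hA.eigenvalues₀_antitone.comp Fin.rev_anti).sortedLE_ofFn

variable {m : Type*} [Fintype m] [DecidableEq m] {B : Matrix m m ℝ}

theorem sortedEigs_getD_le_of_inner_le (hA : A.IsHermitian) (hB : B.IsHermitian)
    (hnm : Fintype.card n ≤ Fintype.card m) (ι : EuclideanSpace ℝ n →ₗᵢ[ℝ] EuclideanSpace ℝ m)
    (hAB : ∀ v, ⟪toEuclideanLin A v, v⟫ ≤ ⟪toEuclideanLin B (ι v), ι v⟫)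
    {j : ℕ} (hj : j < Fintype.card n) :
    (sortedEigs A).getD j 0 ≤ (sortedEigs B).getD (Fintype.card m - Fintype.card n + j) 0 := by
  have h :
      hA.eigenvalues₀ (Fin.rev ⟨j, hj⟩) ≤ hB.eigenvalues₀ (Fin.castLE hnm (Fin.rev ⟨j, hj⟩)) :=
    LinearMap.IsSymmetric.eigenvalues_le_of_inner_le_s11
      (isSymmetric_toEuclideanLin_iff.mpr hA) (isSymmetric_toEuclideanLin_iff.mpr hB)
      finrank_euclideanSpace finrank_euclideanSpace hnm ι hAB _
  have hj' : Fintype.card m - Fintype.card n + j < Fintype.card m := by omega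
  simp only [hA.sortedEigs_eq_ofFn, hB.sortedEigs_eq_ofFn, List.getD_eq_getElem?_getD,
    List.getElem?_ofFn, dif_pos hj, dif_pos hj', Option.getD_some, Function.comp_apply]
  convert h using 2
  ext
  simp only [Fin.val_rev, Fin.val_castLE]
  omega

end Matrix.IsHermitian

section ExtendByZero

variable {ι κ : Type*} [Fintype ι] [Fintype κ] {j : ι → κ}

theorem dotProduct_extend_zero {R : Type*} [NonUnitalNonAssocSemiring R] (hj : Injective j)
    (u : κ → R) (v : ι → R) : u ⬝ᵥ extend j v 0 = (u ∘ j) ⬝ᵥ v := by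
  calc ∑ b, u b * extend j v 0 b = ∑ b ∈ Finset.univ.map ⟨j, hj⟩, u b * extend j v 0 b := by
        refine (Finset.sum_subset (Finset.subset_univ _) fun b _ hb => ?_).symm
        rw [extend_apply' (f := j) _ _ _ fun ⟨a, ha⟩ =>
          hb (Finset.mem_map.mpr ⟨a, Finset.mem_univ _, ha⟩)]
        simp
    _ = ∑ a, u (j a) * v a := by simp [hj.extend_apply]

theorem Matrix.mulVec_extend_zero {m R : Type*} [NonUnitalNonAssocSemiring R] (hj : Injective j)
    (C : Matrix m κ R) (v : ι → R) : C *ᵥ extend j v 0 = C.submatrix id j *ᵥ v :=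
  funext fun a => dotProduct_extend_zero hj (C a) v

namespace EuclideanSpace

noncomputable def extendByZero_s11 (hj : Injective j) :
    EuclideanSpace ℝ ι →ₗᵢ[ℝ] EuclideanSpace ℝ κ :=
  LinearMap.isometryOfInner ((WithLp.linearEquiv 2 ℝ (κ → ℝ)).symm.toLinearMap ∘ₗ
    ExtendByZero.linearMap ℝ j ∘ₗ (WithLp.linearEquiv 2 ℝ (ι → ℝ)).toLinearMap) fun v w => by
    simp only [EuclideanSpace.inner_eq_star_dotProduct, star_trivial]
    exact (dotProduct_extend_zero hj _ _).trans (congrArg (· ⬝ᵥ _) (extend_comp hj _ _))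

theorem extendByZero_apply (hj : Injective j) (v : EuclideanSpace ℝ ι) :
    extendByZero_s11 hj v = WithLp.toLp 2 (extend j v 0) := rfl

theorem norm_comp_le (hj : Injective j) (w : EuclideanSpace ℝ κ) :
    ‖(WithLp.toLp 2 (w ∘ j) : EuclideanSpace ℝ ι)‖ ≤ ‖w‖ := by
  simp only [EuclideanSpace.norm_eq]
  gcongr
  calc ∑ a, ‖w (j a)‖ ^ 2 = ∑ b ∈ Finset.univ.map ⟨j, hj⟩, ‖w b‖ ^ 2 :=
        (Finset.sum_map Finset.univ ⟨j, hj⟩ fun b => ‖w b‖ ^ 2).symm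
    _ ≤ ∑ b, ‖w b‖ ^ 2 := Finset.sum_le_univ_sum_of_nonneg fun b => by positivity

end EuclideanSpace

end ExtendByZero

def Finset.inclusion {α : Type*} {s t : Finset α} (h : s ⊆ t) : s → t :=
  fun x => ⟨x.1, h x.2⟩

theorem Finset.inclusion_injective {α : Type*} {s t : Finset α} (h : s ⊆ t) :
    Injective (Finset.inclusion h) :=
  fun _ _ hxy => Subtype.ext (congrArg Subtype.val hxy :)

theorem dirac_apply_comm (H : Finset (Finset ℕ)) (a b : {x // x ∈ H}) :
    dirac H a b = dirac H b a :=
  add_comm _ _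

noncomputable def diracOnForms (H : Finset (Finset ℕ)) (k : ℕ) :
    Matrix {x // x ∈ H} {x // x ∈ H.filter fun s : Finset ℕ => s.card = k + 1} ℝ :=
  (dirac H).submatrix id (Finset.inclusion (Finset.filter_subset _ H))

theorem formBlock_eq_conjTranspose_mul (H : Finset (Finset ℕ)) (k : ℕ) :
    formBlock H k = (diracOnForms H k)ᴴ * diracOnForms H k := by
  ext x y
  simp only [formBlock, hodge, diracOnForms, Matrix.of_apply, Matrix.mul_apply,
    Matrix.conjTranspose_apply, Matrix.submatrix_apply, star_trivial, id]
  exact Finset.sum_congr rfl fun z _ => by rw [dirac_apply_comm H _ z]; rfl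

theorem isHermitian_formBlock (H : Finset (Finset ℕ)) (k : ℕ) : (formBlock H k).IsHermitian :=
  formBlock_eq_conjTranspose_mul H k ▸ Matrix.isHermitian_conjTranspose_mul_self _

theorem inner_toEuclideanLin_formBlock (H : Finset (Finset ℕ)) (k : ℕ)
    (v : EuclideanSpace ℝ {x // x ∈ H.filter fun s : Finset ℕ => s.card = k + 1}) :
    ⟪toEuclideanLin (formBlock H k) v, v⟫ = ‖toEuclideanLin (diracOnForms H k) v‖ ^ 2 := by
  rw [formBlock_eq_conjTranspose_mul, Matrix.toLpLin_mul_same,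
    Matrix.toEuclideanLin_conjTranspose_eq_adjoint, LinearMap.comp_apply,
    LinearMap.adjoint_inner_left, real_inner_self_eq_norm_sq]

theorem diracOnForms_submatrix {K G : Finset (Finset ℕ)} (hKG : K ⊆ G) (k : ℕ) :
    (diracOnForms G k).submatrix (Finset.inclusion hKG)
      (Finset.inclusion (Finset.filter_subset_filter _ hKG)) = diracOnForms K k :=
  rfl

noncomputable def formsExtendByZero {K G : Finset (Finset ℕ)} (hKG : K ⊆ G) (k : ℕ) :
    EuclideanSpace ℝ {x // x ∈ K.filter fun s : Finset ℕ => s.card = k + 1} →ₗᵢ[ℝ]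
      EuclideanSpace ℝ {x // x ∈ G.filter fun s : Finset ℕ => s.card = k + 1} :=
  EuclideanSpace.extendByZero_s11 (Finset.inclusion_injective (Finset.filter_subset_filter _ hKG))

theorem inner_formBlock_le_formsExtendByZero {K G : Finset (Finset ℕ)} (hKG : K ⊆ G) (k : ℕ)
    (v : EuclideanSpace ℝ {x // x ∈ K.filter fun s : Finset ℕ => s.card = k + 1}) :
    ⟪toEuclideanLin (formBlock K k) v, v⟫ ≤
      ⟪toEuclideanLin (formBlock G k) (formsExtendByZero hKG k v), formsExtendByZero hKG k v⟫ := by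
  have hrestrict : toEuclideanLin (diracOnForms K k) v = WithLp.toLp 2
      (toEuclideanLin (diracOnForms G k) (formsExtendByZero hKG k v) ∘ Finset.inclusion hKG) := by
    rw [← diracOnForms_submatrix hKG, formsExtendByZero, EuclideanSpace.extendByZero_apply,
      Matrix.toLpLin_apply,
      Matrix.toLpLin_apply, Matrix.mulVec_extend_zero (Finset.inclusion_injective _)]
    rfl
  rw [inner_toEuclideanLin_formBlock, inner_toEuclideanLin_formBlock, hrestrict]
  exact pow_le_pow_left₀ (norm_nonneg _) (EuclideanSpace.norm_comp_le
    (Finset.inclusion_injective hKG) _) 2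

theorem card_forms_eq_fVec (H : Finset (Finset ℕ)) (k : ℕ) :
    Fintype.card {x // x ∈ H.filter fun s : Finset ℕ => s.card = k + 1} = fVec H k :=
  Fintype.card_coe _

theorem form_monotonicity_general (K G : Finset (Finset ℕ)) (hKG : K ⊆ G) (k : ℕ) :
    fVec K k ≤ fVec G k ∧
    ∀ j < fVec K k,
      (sortedEigs (formBlock K k)).getD j 0 ≤
        (sortedEigs (formBlock G k)).getD (fVec G k - fVec K k + j) 0 := by
  have hcard : fVec K k ≤ fVec G k := Finset.card_le_card (Finset.filter_subset_filter _ hKG)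
  refine ⟨hcard, fun j hj => ?_⟩
  simpa only [card_forms_eq_fVec] using
    (isHermitian_formBlock K k).sortedEigs_getD_le_of_inner_le (isHermitian_formBlock G k)
      (by simpa only [card_forms_eq_fVec] using hcard) (formsExtendByZero hKG k)
      (inner_formBlock_le_formsExtendByZero hKG k) (by simpa only [card_forms_eq_fVec] using hj)

/-- **Form monotonicity** (Corollary).  If `K ⊆ G` are finite abstract simplicial
complexes and `k ≥ 0`, then `f_k(K) ≤ f_k(G)` and the left-padded ascending
eigenvalue sequences of the `k`-form blocks satisfy: for every `j < f_k(K)` (0-based),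
the `j`-th smallest eigenvalue of `L_k(K)` is at most the
`(f_k(G) - f_k(K) + j)`-th smallest eigenvalue of `L_k(G)`. -/
theorem form_monotonicity (K G : Finset (Finset ℕ))
    (hK : IsComplex K) (hG : IsComplex G) (hKG : K ⊆ G) (k : ℕ) :
    fVec K k ≤ fVec G k ∧
    ∀ j < fVec K k,
      (sortedEigs (formBlock K k)).getD j 0 ≤
        (sortedEigs (formBlock G k)).getD (fVec G k - fVec K k + j) 0 :=
  form_monotonicity_general K G hKG k
end
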